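/- Let P be a finite poset, let T ⊆ H_P be a line connected subgraph that is a tree, let P_T be the sub-poset generated by T, and let M be a kP-module whose gradient vanishes on T (i.e. there is a natural isomorphism β*(M_T) ≅ φ*(M_T)). Fix a non-maximal element x₀ of P_T. Then there exist a family of isomorphisms α_{u,v} : M(u) → M(v) for u, v ∈ P_T satisfying α_{u,u} = id, α_{v,w} ∘ α_{u,v} = α_{u,w}, and α_{w,t} ∘ M(u ≤ w) = M(s ≤ t) ∘ α_{u,s} for all covering relations u ⋖ w, s ⋖ t in P_T, together with an endomorphism γ₀ of M(x₀), such that for every strict relation y < y′ in P_T one has M(y ≤ y′) = α_{x₀,y′} ∘ γ₀^m ∘ α_{y,x₀}, where m is the graph distance from y to y′ in T (the number of covering relations in the chain from y to y′ in T). -/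

import Mathlib

/-!
Transporting the gradient isomorphisms `φ_e` (or their inverses) along the unique path of the
tree `T` from `x₀` to `v` gives isomorphisms `A v : M(x₀) ≅ M(v)` with `A b = φ_{(a,b)} ∘ A a`
on every edge. Conjugating by them, each edge `e = (a, b)` yields an endomorphism
`γ_e = (A b)⁻¹ ∘ M(a ≤ b) ∘ A a` of `M(x₀)`, and naturality of `φ` on consecutive edges says
precisely that `γ_e = γ_f` whenever `e` ends where `f` starts, so line connectedness makes `γ`
constant. Covering relations of `P_T` are edges of `T`, and along a chain of `m` edges the
structure maps compose to `A y' ∘ γ^m ∘ (A y)⁻¹`; hence `α_{u,v} = A v ∘ (A u)⁻¹` works.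
-/

/-- A `kP`-module: a functor from the poset `P` to finite dimensional
`k`-vector spaces, given by concrete data. -/
structure PModule (k : Type) (P : Type) [Field k] [Preorder P] where
  V : P → Type
  [acg : ∀ x, AddCommGroup (V x)]
  [mod : ∀ x, Module k (V x)]
  [fd : ∀ x, FiniteDimensional k (V x)]
  map : ∀ {x y : P}, x ≤ y → (V x →ₗ[k] V y)
  map_id : ∀ x : P, map (le_refl x) = LinearMap.id
  map_comp : ∀ {x y z : P} (h₁ : x ≤ y) (h₂ : y ≤ z), map (h₁.trans h₂) = (map h₂).comp (map h₁)

attribute [instance] PModule.acg PModule.mod PModule.fd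

/-- The order relation of the sub-poset `P_T` generated by the edge set `Te` on the
vertex set `Tv`: the reflexive-transitive closure of the edge relation of `T`. -/
def ptle {P : Type} [PartialOrder P] (Tv : Set P) (Te : Set (P × P)) (a b : ↥Tv) : Prop :=
  Relation.ReflTransGen (fun x y : ↥Tv => ((x : P), (y : P)) ∈ Te) a b

/-- The strict order relation of the sub-poset `P_T`. -/
def ptlt {P : Type} [PartialOrder P] (Tv : Set P) (Te : Set (P × P)) (a b : ↥Tv) : Prop :=
  ptle Tv Te a b ∧ ¬ ptle Tv Te b a

/-- The covering relation of the sub-poset `P_T`. -/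
def ptcov {P : Type} [PartialOrder P] (Tv : Set P) (Te : Set (P × P)) (a b : ↥Tv) : Prop :=
  ptlt Tv Te a b ∧ ∀ c : ↥Tv, ptlt Tv Te a c → ¬ ptlt Tv Te c b

/-- The order relation of the line poset of `P_T`, whose elements are the edges of `T`:
`e ≤ f` iff there is a chain of consecutive edges from `e` to `f`. -/
def tline {P : Type} [PartialOrder P] (Te : Set (P × P)) (e f : ↥Te) : Prop :=
  Relation.ReflTransGen (fun a b : ↥Te => (a : P × P).2 = (b : P × P).1) e f

namespace SimpleGraph

variable {V : Type*} {G : SimpleGraph V}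

theorem IsAcyclic.isPath_concat_or_eq_concat (hG : G.IsAcyclic) {x a b : V} {p : G.Walk x a}
    (hp : p.IsPath) (h : G.Adj a b) :
    (p.concat h).IsPath ∨ ∃ q : G.Walk x b, p = q.concat h.symm := by
  classical
  by_cases hb : b ∈ p.support
  · have hdrop : p.dropUntil b hb = .cons h.symm .nil :=
      congrArg Subtype.val ((hG.subsingleton_path b a).elim ⟨_, hp.dropUntil hb⟩
        (Path.singleton h.symm))
    exact Or.inr ⟨p.takeUntil b hb, by rw [Walk.concat_eq_append, ← hdrop, Walk.take_spec]⟩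
  · exact Or.inl (hp.concat hb h)

theorem Preconnected.apply_eq_of_rel {β : Type*} {r : V → V → Prop}
    (hr : (fromRel r).Preconnected) {f : V → β} (hf : ∀ a b, r a b → f a = f b) (a b : V) :
    f a = f b := by
  obtain ⟨p⟩ := hr a b
  induction p with
  | nil => rfl
  | cons hadj _ ih => exact (hadj.2.elim (hf _ _) fun h => (hf _ _ h).symm).trans ih

section Transport

variable {R : Type*} [Semiring R] {W : V → Type*} [∀ v, AddCommMonoid (W v)]
  [∀ v, Module R (W v)] (τ : ∀ a b, G.Adj a b → W a ≃ₗ[R] W b)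

def Walk.transport : ∀ {a b : V}, G.Walk a b → (W a ≃ₗ[R] W b)
  | _, _, .nil => LinearEquiv.refl R _
  | _, _, .cons h p => (τ _ _ h).trans (p.transport)

theorem Walk.transport_append {a b c : V} (p : G.Walk a b) (q : G.Walk b c) :
    (p.append q).transport τ = (p.transport τ).trans (q.transport τ) := by
  induction p with
  | nil => rfl
  | cons h p ih =>
    simp only [Walk.cons_append, Walk.transport, ih]
    rfl

theorem Walk.transport_concat {a b c : V} (p : G.Walk a b) (h : G.Adj b c) :
    (p.concat h).transport τ = (p.transport τ).trans (τ b c h) := by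
  rw [Walk.concat_eq_append, transport_append]
  rfl

theorem IsTree.exists_transport_trivialization (hG : G.IsTree)
    (hτ : ∀ a b (h : G.Adj a b), τ b a h.symm = (τ a b h).symm) (x₀ : V) :
    ∃ A : ∀ v, W x₀ ≃ₗ[R] W v,
      A x₀ = LinearEquiv.refl R _ ∧ ∀ a b (h : G.Adj a b), A b = (A a).trans (τ a b h) := by
  choose f hf hf' using hG.existsUnique_path x₀
  refine ⟨fun v => (f v).transport τ, ?_, fun a b h => ?_⟩ <;> dsimp only
  · rw [← hf' x₀ .nil .nil]
    rfl
  rcases hG.isAcyclic.isPath_concat_or_eq_concat (hf a) h with hpath | ⟨q, hq⟩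
  · rw [← hf' b _ hpath, Walk.transport_concat]
  · have hqb : q = f b := hf' b q ((Walk.concat_isPath_iff _).1 (hq ▸ hf a)).1
    rw [hq, Walk.transport_concat, hτ a b h, ← hqb]
    ext
    simp

open Classical in
noncomputable def fromRelTransport (r : V → V → Prop) (φ : ∀ a b, r a b → W a ≃ₗ[R] W b)
    (a b : V) (h : (fromRel r).Adj a b) : W a ≃ₗ[R] W b :=
  if hab : r a b then φ a b hab else (φ b a (h.2.resolve_left hab)).symm

theorem fromRelTransport_of_rel {r : V → V → Prop} (φ : ∀ a b, r a b → W a ≃ₗ[R] W b)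
    {a b : V} (h : (fromRel r).Adj a b) (hab : r a b) : fromRelTransport r φ a b h = φ a b hab :=
  dif_pos hab

theorem fromRelTransport_symm {r : V → V → Prop} (hr : ∀ a b, r a b → ¬ r b a)
    (φ : ∀ a b, r a b → W a ≃ₗ[R] W b) {a b : V} (h : (fromRel r).Adj a b) :
    fromRelTransport r φ b a h.symm = (fromRelTransport r φ a b h).symm := by
  by_cases hab : r a b
  · rw [fromRelTransport_of_rel φ h hab, fromRelTransport, dif_neg (hr a b hab)]
  · rw [fromRelTransport_of_rel φ h.symm (h.2.resolve_left hab), fromRelTransport, dif_neg hab,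
      LinearEquiv.symm_symm]

theorem IsTree.exists_trivialization_of_fromRel {r : V → V → Prop} (hG : (fromRel r).IsTree)
    (hr : ∀ a b, r a b → ¬ r b a) (φ : ∀ a b, r a b → W a ≃ₗ[R] W b) (x₀ : V) :
    ∃ A : ∀ v, W x₀ ≃ₗ[R] W v,
      A x₀ = LinearEquiv.refl R _ ∧ ∀ a b (hab : r a b), A b = (A a).trans (φ a b hab) := by
  obtain ⟨A, hA₀, hA⟩ :=
    hG.exists_transport_trivialization _ (fun _ _ => fromRelTransport_symm hr φ) x₀
  refine ⟨A, hA₀, fun a b hab => ?_⟩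
  have hadj : (fromRel r).Adj a b := ⟨fun h => hr a b hab (h ▸ hab), Or.inl hab⟩
  rw [hA a b hadj, fromRelTransport_of_rel φ hadj hab]

end Transport

end SimpleGraph

section PosetModule

variable {k P : Type} [Field k] [PartialOrder P] {Tv : Set P} {Te : Set (P × P)}

theorem le_of_ptle (hTe : ∀ e ∈ Te, e.1 ≤ e.2) {a b : Tv} (h : ptle Tv Te a b) :
    (a : P) ≤ b := by
  induction h with
  | refl => exact le_rfl
  | tail _ hbc ih => exact ih.trans (hTe _ hbc)

theorem mem_of_ptcov (hTe : ∀ e ∈ Te, e.1 < e.2) {u w : Tv} (h : ptcov Tv Te u w) :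
    ((u : P), (w : P)) ∈ Te := by
  obtain ⟨⟨huw, hwu⟩, hmin⟩ := h
  have hle : ∀ e ∈ Te, e.1 ≤ e.2 := fun e he => (hTe e he).le
  rcases huw.cases_head with rfl | ⟨c, huc, hcw⟩
  · exact absurd .refl hwu
  obtain rfl | hne := eq_or_ne c w
  · exact huc
  have hltuc : ptlt Tv Te u c :=
    ⟨.single huc, fun hcu => (hTe _ huc).not_ge (le_of_ptle hle hcu)⟩
  have hltcw : ptlt Tv Te c w :=
    ⟨hcw, fun hwc => hne (Subtype.ext ((le_of_ptle hle hcw).antisymm (le_of_ptle hle hwc)))⟩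
  exact absurd hltcw (hmin c hltuc)

variable {U : Type*} [AddCommGroup U] [Module k U] (M : PModule k P)

theorem exists_edge_map_eq_conj (hTe : ∀ e ∈ Te, e.1 ≤ e.2 ∧ e.1 ∈ Tv ∧ e.2 ∈ Tv)
    (hlc : (SimpleGraph.fromRel (fun e f : Te => (e : P × P).2 = (f : P × P).1)).Connected)
    (φ : ∀ e : Te, M.V (e : P × P).1 ≃ₗ[k] M.V (e : P × P).2)
    (hφ : ∀ e f : Te, (e : P × P).2 = (f : P × P).1 →
      ∀ (h1 : (e : P × P).1 ≤ (f : P × P).1) (h2 : (e : P × P).2 ≤ (f : P × P).2),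
        (φ f).toLinearMap ∘ₗ M.map h1 = M.map h2 ∘ₗ (φ e).toLinearMap)
    (A : ∀ v : Tv, U ≃ₗ[k] M.V v)
    (hA : ∀ (a b : Tv) (hab : ((a : P), (b : P)) ∈ Te), A b = (A a).trans (φ ⟨_, hab⟩)) :
    ∃ γ : Module.End k U, ∀ a b : Tv, ((a : P), (b : P)) ∈ Te →
      ∃ h : (a : P) ≤ b, M.map h = (A b).toLinearMap ∘ₗ γ ∘ₗ (A a).symm.toLinearMap := by
  obtain ⟨e₀⟩ := hlc.nonempty
  let g : Te → Module.End k U := fun e =>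
    (A ⟨_, (hTe _ e.2).2.2⟩).symm.toLinearMap ∘ₗ M.map (hTe _ e.2).1 ∘ₗ
      (A ⟨_, (hTe _ e.2).2.1⟩).toLinearMap
  have hg : ∀ e f : Te, (e : P × P).2 = (f : P × P).1 → g e = g f := by
    rintro ⟨⟨a, b⟩, hab⟩ ⟨⟨b', c⟩, hbc⟩ (rfl : b = b')
    have hnat := hφ ⟨_, hab⟩ ⟨_, hbc⟩ rfl (hTe _ hab).1 (hTe _ hbc).1
    ext x
    obtain ⟨-, ha, hb⟩ := hTe _ hab
    have key : M.map (hTe _ hbc).1 (A ⟨b, hb⟩ x) =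
        φ ⟨_, hbc⟩ (M.map (hTe _ hab).1 (A ⟨a, ha⟩ x)) := by
      rw [hA ⟨a, ha⟩ ⟨b, hb⟩ hab]
      exact (LinearMap.congr_fun hnat _).symm
    simp only [g, LinearMap.comp_apply, LinearEquiv.coe_coe, key,
      hA ⟨b, hb⟩ ⟨c, (hTe _ hbc).2.2⟩ hbc]
    simp
  refine ⟨g e₀, fun a b hab => ⟨(hTe _ hab).1, ?_⟩⟩
  rw [hlc.preconnected.apply_eq_of_rel hg e₀ ⟨_, hab⟩]
  ext
  simp [g]

theorem exists_map_eq_of_chain {A : ∀ v : Tv, U ≃ₗ[k] M.V v} {γ : Module.End k U}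
    (hedge : ∀ a b : Tv, ((a : P), (b : P)) ∈ Te →
      ∃ h : (a : P) ≤ b, M.map h = (A b).toLinearMap ∘ₗ γ ∘ₗ (A a).symm.toLinearMap) :
    ∀ (l : List Tv) (y y' : Tv), l.IsChain (fun a b : Tv => ((a : P), (b : P)) ∈ Te) →
      l.head? = some y → l.getLast? = some y' →
      ∃ h : (y : P) ≤ y',
        M.map h = (A y').toLinearMap ∘ₗ (γ ^ (l.length - 1)) ∘ₗ (A y).symm.toLinearMap
  | [], _, _, _, hy, _ => by simp at hy
  | [a], y, y', _, hy, hy' => by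
    obtain ⟨rfl, rfl⟩ : a = y ∧ a = y' := by simp_all
    refine ⟨le_rfl, ?_⟩
    ext
    simp [M.map_id]
  | a :: b :: t, y, y', hch, hy, hy' => by
    obtain rfl : a = y := by simpa using hy
    obtain ⟨hab, htail⟩ := List.isChain_cons_cons.mp hch
    obtain ⟨h₁, e₁⟩ := hedge a b hab
    obtain ⟨h₂, e₂⟩ := exists_map_eq_of_chain hedge (b :: t) b y' htail rfl
      (by rwa [List.getLast?_cons_cons] at hy')
    refine ⟨h₁.trans h₂, ?_⟩
    ext
    simp [M.map_comp h₁ h₂, e₁, e₂, pow_succ]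

end PosetModule

theorem statement17_general (k : Type) [Field k] (P : Type) [PartialOrder P]
    (Tv : Set P) (Te : Set (P × P))
    -- `T` is a subgraph of the Hasse diagram `H_P`, with vertex set `Tv` and edge set `Te`
    (hTe : ∀ e ∈ Te, (e.1 ⋖ e.2) ∧ e.1 ∈ Tv ∧ e.2 ∈ Tv)
    -- `T` is a tree: its underlying undirected graph is connected and acyclic
    (htree : (SimpleGraph.fromRel (fun a b : ↥Tv => ((a : P), (b : P)) ∈ Te)).IsTree)
    -- `T` is line connected: the line digraph of `T` is connected as an undirected graph
    (hlc : (SimpleGraph.fromRel (fun e f : ↥Te => (e : P × P).2 = (f : P × P).1)).Connected)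
    (M : PModule k P)
    -- the gradient of `M` vanishes on `T`: a natural isomorphism `β*(M_T) ≅ φ*(M_T)`
    (hgrad : ∃ α : ∀ e : ↥Te, (M.V (e : P × P).1 ≃ₗ[k] M.V (e : P × P).2),
      ∀ (e f : ↥Te), tline Te e f →
        ∀ (h1 : (e : P × P).1 ≤ (f : P × P).1) (h2 : (e : P × P).2 ≤ (f : P × P).2),
          (α f).toLinearMap.comp (M.map h1) = (M.map h2).comp (α e).toLinearMap)
    -- a fixed non-maximal element `x₀` of `P_T`
    (x₀ : ↥Tv) :
    ∃ (α : ∀ u v : ↥Tv, (M.V (u : P) ≃ₗ[k] M.V (v : P)))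
      (γ₀ : Module.End k (M.V (x₀ : P))),
      (∀ u : ↥Tv, α u u = LinearEquiv.refl k (M.V (u : P))) ∧
      (∀ u v w : ↥Tv, (α u v).trans (α v w) = α u w) ∧
      (∀ u w s t : ↥Tv, ptcov Tv Te u w → ptcov Tv Te s t →
        ∀ (h1 : (u : P) ≤ (w : P)) (h2 : (s : P) ≤ (t : P)),
          (α w t).toLinearMap.comp (M.map h1) = (M.map h2).comp ((α u s).toLinearMap)) ∧
      -- for `y < y′` in `P_T` at graph distance `m` in `T` (witnessed by the chain of
      -- consecutive edges of `T` from `y` to `y′`, a list of `m + 1` vertices):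
      (∀ (y y' : ↥Tv), ptlt Tv Te y y' → ∀ (m : ℕ) (l : List ↥Tv),
        l.Chain' (fun a b : ↥Tv => ((a : P), (b : P)) ∈ Te) →
        l.head? = some y → l.getLast? = some y' → l.length = m + 1 →
        ∀ (h : (y : P) ≤ (y' : P)),
          M.map h = ((α x₀ y').toLinearMap.comp
            ((γ₀ ^ m : Module.End k (M.V (x₀ : P))).comp ((α y x₀).toLinearMap)))) := by
  obtain ⟨φ, hφ⟩ := hgrad
  have hlt : ∀ e ∈ Te, e.1 < e.2 := fun e he => (hTe e he).1.lt
  obtain ⟨A, hA₀, hA⟩ := htree.exists_trivialization_of_fromRel (W := fun v : Tv => M.V v)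
    (fun a b hab hba => (hlt _ hab).not_gt (hlt _ hba)) (fun a b hab => φ ⟨_, hab⟩) x₀
  obtain ⟨γ, hγ⟩ := exists_edge_map_eq_conj M (fun e he => ⟨(hlt e he).le, (hTe e he).2⟩) hlc φ
    (fun e f hef => hφ e f (.single hef)) A hA
  refine ⟨fun u v => (A u).symm.trans (A v), γ, fun u => by ext; simp, fun u v w => by ext; simp,
    fun u w s t huw hst _ _ => ?_, fun y y' _ m l hl hy hy' hm _ => ?_⟩
  · obtain ⟨_, huw⟩ := hγ u w (mem_of_ptcov hlt huw)
    obtain ⟨_, hst⟩ := hγ s t (mem_of_ptcov hlt hst)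
    rw [huw, hst]
    ext
    simp
  · obtain ⟨_, hmap⟩ := exists_map_eq_of_chain M hγ l y y' hl hy hy'
    rw [hmap, show l.length - 1 = m by omega]
    ext
    simp [hA₀]

theorem statement17 (k : Type) [Field k] (P : Type) [Fintype P] [PartialOrder P]
    (Tv : Set P) (Te : Set (P × P))
    -- `T` is a subgraph of the Hasse diagram `H_P`, with vertex set `Tv` and edge set `Te`
    (hTe : ∀ e ∈ Te, (e.1 ⋖ e.2) ∧ e.1 ∈ Tv ∧ e.2 ∈ Tv)
    -- `T` is a tree: its underlying undirected graph is connected and acyclic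
    (htree : (SimpleGraph.fromRel (fun a b : ↥Tv => ((a : P), (b : P)) ∈ Te)).IsTree)
    -- `T` is line connected: the line digraph of `T` is connected as an undirected graph
    (hlc : (SimpleGraph.fromRel (fun e f : ↥Te => (e : P × P).2 = (f : P × P).1)).Connected)
    (M : PModule k P)
    -- the gradient of `M` vanishes on `T`: a natural isomorphism `β*(M_T) ≅ φ*(M_T)`
    (hgrad : ∃ α : ∀ e : ↥Te, (M.V (e : P × P).1 ≃ₗ[k] M.V (e : P × P).2),
      ∀ (e f : ↥Te), tline Te e f →
        ∀ (h1 : (e : P × P).1 ≤ (f : P × P).1) (h2 : (e : P × P).2 ≤ (f : P × P).2),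
          (α f).toLinearMap.comp (M.map h1) = (M.map h2).comp (α e).toLinearMap)
    -- a fixed non-maximal element `x₀` of `P_T`
    (x₀ : ↥Tv) (hx₀ : ∃ z : ↥Tv, ptlt Tv Te x₀ z) :
    ∃ (α : ∀ u v : ↥Tv, (M.V (u : P) ≃ₗ[k] M.V (v : P)))
      (γ₀ : Module.End k (M.V (x₀ : P))),
      (∀ u : ↥Tv, α u u = LinearEquiv.refl k (M.V (u : P))) ∧
      (∀ u v w : ↥Tv, (α u v).trans (α v w) = α u w) ∧
      (∀ u w s t : ↥Tv, ptcov Tv Te u w → ptcov Tv Te s t →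
        ∀ (h1 : (u : P) ≤ (w : P)) (h2 : (s : P) ≤ (t : P)),
          (α w t).toLinearMap.comp (M.map h1) = (M.map h2).comp ((α u s).toLinearMap)) ∧
      -- for `y < y′` in `P_T` at graph distance `m` in `T` (witnessed by the chain of
      -- consecutive edges of `T` from `y` to `y′`, a list of `m + 1` vertices):
      (∀ (y y' : ↥Tv), ptlt Tv Te y y' → ∀ (m : ℕ) (l : List ↥Tv),
        l.Chain' (fun a b : ↥Tv => ((a : P), (b : P)) ∈ Te) →
        l.head? = some y → l.getLast? = some y' → l.length = m + 1 →
        ∀ (h : (y : P) ≤ (y' : P)),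
          M.map h = ((α x₀ y').toLinearMap.comp
            ((γ₀ ^ m : Module.End k (M.V (x₀ : P))).comp ((α y x₀).toLinearMap)))) :=
  statement17_general k P Tv Te hTe htree hlc M hgrad x₀
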